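/- arXiv:2603.19786 — 7 statements merged into one kernel-verified Lean document; each statement's English description precedes it below -/
import Mathlib

section
/- The formal power series 1 + ∑_{n=0}^∞ T^{2^n + 1} over ℤ is not a rational function; that is, there do not exist nonzero polynomials f, g ∈ ℤ[T] with f(T) = g(T)·(1 + ∑_{n=0}^∞ T^{2^n+1}). -/
/- A nonzero coefficient of `F` followed by a block of `natDegree g` zeros makes the
corresponding coefficient of `g * F` equal to `leadingCoeff g` times it. Since `1 + ∑ T^(2^n+1)`
has such blocks of unbounded length, `g * F` has nonzero coefficients of arbitrarily high degree,
so it is not a polynomial. -/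

open scoped Classical

/-- The formal power series `1 + ∑_{n=0}^∞ T^(2^n + 1)` over ℤ: its constant
coefficient is 1, and for m > 0 the coefficient of T^m is 1 if m = 2^n + 1 for
some n and 0 otherwise (each such m arises from at most one n). -/
noncomputable def Fseries : PowerSeries ℤ :=
  PowerSeries.mk fun m => if m = 0 then 1 else if ∃ n : ℕ, m = 2 ^ n + 1 then 1 else 0

open scoped Polynomial

open PowerSeries

theorem PowerSeries.coeff_polynomial_mul_of_gap {R : Type*} [Semiring R] (g : R[X]) (F : R⟦X⟧)
    (a : ℕ) (hgap : ∀ j, a < j → j ≤ a + g.natDegree → coeff j F = 0) :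
    coeff (g.natDegree + a) ((g : R⟦X⟧) * F) = g.leadingCoeff * coeff a F := by
  rw [coeff_mul, Finset.sum_eq_single (g.natDegree, a)]
  · rw [Polynomial.coeff_coe]
    rfl
  · rintro ⟨i, j⟩ hij hne
    rw [Finset.HasAntidiagonal.mem_antidiagonal] at hij
    by_cases hi : g.natDegree < i
    · rw [Polynomial.coeff_coe, Polynomial.coeff_eq_zero_of_natDegree_lt hi, zero_mul]
    · have hj : a < j := by
        by_contra
        exact hne (Prod.ext (by omega) (by omega))
      rw [hgap j hj (by omega), mul_zero]
  · simp

theorem PowerSeries.not_exists_polynomial_eq_mul_of_gaps {R : Type*} [Semiring R]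
    [NoZeroDivisors R] (F : R⟦X⟧)
    (hF : ∀ N, ∃ a, N ≤ a ∧ coeff a F ≠ 0 ∧ ∀ j, a < j → j ≤ a + N → coeff j F = 0) :
    ¬ ∃ f g : R[X], g ≠ 0 ∧ (f : R⟦X⟧) = g * F := by
  rintro ⟨f, g, hg, hfg⟩
  obtain ⟨a, hNa, hFa, hgap⟩ := hF (f.natDegree + g.natDegree + 1)
  have hcoeff := congrArg (coeff (g.natDegree + a)) hfg
  rw [coeff_polynomial_mul_of_gap g F a fun j h₁ h₂ => hgap j h₁ (by omega),
    Polynomial.coeff_coe, Polynomial.coeff_eq_zero_of_natDegree_lt (by omega)] at hcoeff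
  exact mul_ne_zero (Polynomial.leadingCoeff_ne_zero.mpr hg) hFa hcoeff.symm

theorem coeff_Fseries_two_pow_add_one (n : ℕ) : coeff (2 ^ n + 1) Fseries = 1 := by
  simp [Fseries]

theorem coeff_Fseries_eq_zero_of_lt_of_le {n j : ℕ} (h₁ : 2 ^ n + 1 < j) (h₂ : j ≤ 2 ^ (n + 1)) :
    coeff j Fseries = 0 := by
  have hj : ¬ ∃ k : ℕ, j = 2 ^ k + 1 := by
    rintro ⟨k, rfl⟩
    have hnk : n < k := (Nat.pow_lt_pow_iff_right one_lt_two).mp (by omega)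
    have hkn : k < n + 1 := (Nat.pow_lt_pow_iff_right one_lt_two).mp (by omega)
    omega
  simp [Fseries, hj, show j ≠ 0 by omega]

/-- The power series 1 + ∑_{n=0}^∞ T^(2^n+1) is not rational: there are no nonzero
polynomials f, g ∈ ℤ[T] with f = g · (1 + ∑ T^(2^n+1)) in ℤ[[T]]. -/
theorem stmt2 :
    ¬ ∃ f g : Polynomial ℤ, f ≠ 0 ∧ g ≠ 0 ∧
      (f : PowerSeries ℤ) = (g : PowerSeries ℤ) * Fseries := by
  rintro ⟨f, g, -, hg, hfg⟩
  have hgaps : ∀ N, ∃ a, N ≤ a ∧ coeff a Fseries ≠ 0 ∧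
      ∀ j, a < j → j ≤ a + N → coeff j Fseries = 0 := by
    intro N
    have hN : N < 2 ^ N := Nat.lt_two_pow_self
    refine ⟨2 ^ N + 1, by omega, by simp [coeff_Fseries_two_pow_add_one N], fun j h₁ h₂ => ?_⟩
    exact coeff_Fseries_eq_zero_of_lt_of_le h₁ (by rw [pow_succ]; omega)
  exact not_exists_polynomial_eq_mul_of_gaps Fseries hgaps ⟨f, g, hg, hfg⟩
end

section
/- The Poincaré series of the set p^R = {p^{2^n} : n ∈ ℕ} ⊆ ℤ_p satisfies (1 - T)·P(T) = 1 + ∑_{n=0}^∞ T^{2^n + 1}, where N_m = |{x mod p^m : x ∈ p^R}| and P(T) = ∑_{m≥0} N_m T^m. -/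
open scoped Classical

section NilpotentPowers

variable {R : Type*} [Ring R] {x : R}

theorem pow_ne_pow_of_isNilpotent (hx : IsNilpotent x) {j k : ℕ} (hj : x ^ j ≠ 0)
    (hjk : j < k) : x ^ j ≠ x ^ k := by
  intro h
  have hunit : IsUnit (1 - x ^ (k - j)) :=
    (hx.pow_of_pos (Nat.sub_ne_zero_of_lt hjk)).isUnit_one_sub
  refine hj (hunit.mul_left_eq_zero.mp ?_)
  rw [mul_sub, mul_one, ← pow_add, Nat.add_sub_cancel' hjk.le, h, sub_self]

variable {m : ℕ}

theorem injOn_pow_Iio_of_pow_eq_zero_iff (hx : ∀ k, x ^ k = 0 ↔ m ≤ k) :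
    Set.InjOn (x ^ ·) (Set.Iio m) := by
  have hnil : IsNilpotent x := ⟨m, (hx m).mpr le_rfl⟩
  have hne : ∀ j < m, x ^ j ≠ 0 := fun j hj h => (Nat.not_le.mpr hj) ((hx j).mp h)
  intro j hj k hk hjk
  rcases lt_trichotomy j k with h | h | h
  · exact absurd hjk (pow_ne_pow_of_isNilpotent hnil (hne j hj) h)
  · exact h
  · exact absurd hjk.symm (pow_ne_pow_of_isNilpotent hnil (hne k hk) h)

theorem image_pow_eq_insert_zero (hx : ∀ k, x ^ k = 0 ↔ m ≤ k) {S : Set ℕ}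
    (hS : S.Infinite) :
    (x ^ ·) '' S = insert 0 ((x ^ ·) '' (S ∩ Set.Iio m)) := by
  ext y
  simp only [Set.mem_image, Set.mem_insert_iff, Set.mem_inter_iff, Set.mem_Iio]
  constructor
  · rintro ⟨k, hk, rfl⟩
    by_cases hkm : k < m
    · exact Or.inr ⟨k, ⟨hk, hkm⟩, rfl⟩
    · exact Or.inl ((hx k).mpr (Nat.not_lt.mp hkm))
  · rintro (rfl | ⟨k, ⟨hk, -⟩, rfl⟩)
    · obtain ⟨k, hk, hmk⟩ := hS.exists_gt m
      exact ⟨k, hk, (hx k).mpr hmk.le⟩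
    · exact ⟨k, hk, rfl⟩

theorem ncard_image_pow_of_pow_eq_zero_iff (hx : ∀ k, x ^ k = 0 ↔ m ≤ k) {S : Set ℕ}
    (hS : S.Infinite) :
    ((x ^ ·) '' S).ncard = Nat.count (· ∈ S) m + 1 := by
  have hzero : (0 : R) ∉ (x ^ ·) '' (S ∩ Set.Iio m) := by
    rintro ⟨k, ⟨-, hk⟩, h⟩
    exact Nat.not_le.mpr hk ((hx k).mp h)
  have hcount : (S ∩ Set.Iio m).ncard = Nat.count (· ∈ S) m := by
    rw [Nat.count_eq_card_filter_range, ← Set.ncard_coe_finset]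
    congr 1
    ext k
    simp [and_comm]
  rw [image_pow_eq_insert_zero hx hS, Set.ncard_insert_of_notMem hzero
      ((Set.finite_Iio m).inter_of_right S |>.image _),
    ((injOn_pow_Iio_of_pow_eq_zero_iff hx).mono Set.inter_subset_right).ncard_image,
    hcount]

end NilpotentPowers

theorem ZMod.natCast_self_pow_eq_zero_iff {p : ℕ} (hp : 1 < p) (m k : ℕ) :
    (p : ZMod (p ^ m)) ^ k = 0 ↔ m ≤ k := by
  rw [← Nat.cast_pow, ZMod.natCast_eq_zero_iff, Nat.pow_dvd_pow_iff_le_right hp]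

theorem PowerSeries.coeff_zero_one_sub_X_mul {R : Type*} [Ring R] (f : PowerSeries R) :
    coeff 0 ((1 - X) * f) = coeff 0 f := by
  simp [sub_mul]

theorem PowerSeries.coeff_succ_one_sub_X_mul {R : Type*} [Ring R] (f : PowerSeries R) (m : ℕ) :
    coeff (m + 1) ((1 - X) * f) = coeff (m + 1) f - coeff m f := by
  rw [sub_mul, one_mul, map_sub, coeff_succ_X_mul]

theorem ncard_toZModPow_image_pow_two_pow (p : ℕ) [Fact p.Prime] (m : ℕ) :
    ((⇑(PadicInt.toZModPow (p := p) m)) ''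
        {x : ℤ_[p] | ∃ n : ℕ, x = (p : ℤ_[p]) ^ (2 ^ n)}).ncard =
      Nat.count (· ∈ Set.range (2 ^ ·)) m + 1 := by
  have himage : (⇑(PadicInt.toZModPow (p := p) m)) ''
      {x : ℤ_[p] | ∃ n : ℕ, x = (p : ℤ_[p]) ^ (2 ^ n)} =
      ((p : ZMod (p ^ m)) ^ ·) '' Set.range (2 ^ ·) := by
    ext y
    simp [eq_comm]
  rw [himage]
  exact ncard_image_pow_of_pow_eq_zero_iff
    (ZMod.natCast_self_pow_eq_zero_iff (Fact.out : p.Prime).one_lt m)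
    (Set.infinite_range_of_injective (Nat.pow_right_injective le_rfl))

/-- The Poincaré series of A = {p^(2^n) : n ∈ ℕ} ⊆ ℤ_p, where
N_m = |{x mod p^m : x ∈ A}| and P(T) = ∑ N_m T^m, satisfies
(1 - T)·P(T) = 1 + ∑_{n=0}^∞ T^(2^n+1). -/
theorem stmt3 (p : ℕ) [Fact p.Prime] :
    (1 - PowerSeries.X) *
      PowerSeries.mk (fun m =>
        (((⇑(PadicInt.toZModPow (p := p) m)) ''
            {x : ℤ_[p] | ∃ n : ℕ, x = (p : ℤ_[p]) ^ (2 ^ n)}).ncard : ℤ)) =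
      Fseries := by
  ext (_ | m)
  · simp [PowerSeries.coeff_zero_one_sub_X_mul, ncard_toZModPow_image_pow_two_pow, Fseries]
  · rw [PowerSeries.coeff_succ_one_sub_X_mul]
    simp only [PowerSeries.coeff_mk, ncard_toZModPow_image_pow_two_pow, Nat.count_succ, Fseries]
    simp [eq_comm]
end

section
/- The sequence (2^n)_{n∈ℕ} is almost sparse: (1) for any two operators A, B, exactly one of A >_{ae} B, A <_{ae} B, A =_{ae} B holds; (2) if A >_{ae} B then there exists Δ ≥ 0 with A(S^Δ(x)) >_{ae} B(S^Δ(x)) + x. -/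
open Filter

/-- Evaluation of an operator `A(x) = ∑ z_i S^i(x)` (given by a finitely supported
family of integer coefficients) at the n-th term of the sequence r, where
`S^i(r_n) = r_{n+i}` (clamped at index 0, matching the convention S⁻¹(r_0) = r_0). -/
def opEval (r : ℕ → ℤ) (A : ℤ →₀ ℤ) (n : ℕ) : ℤ :=
  A.sum fun i c => c * r (((n : ℤ) + i).toNat)

/-- `A >_{ae} B` : A(a) > B(a) for all but finitely many a ∈ R. -/
def AEgt (r : ℕ → ℤ) (A B : ℤ →₀ ℤ) : Prop :=
  ∀ᶠ n in atTop, opEval r B n < opEval r A n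

/-- `A =_{ae} B` : A(a) = B(a) for all but finitely many a ∈ R. -/
def AEeq (r : ℕ → ℤ) (A B : ℤ →₀ ℤ) : Prop :=
  ∀ᶠ n in atTop, opEval r A n = opEval r B n

/-- R is almost sparse: (1) any two operators are ae-comparable; (2) whenever
A >_{ae} B there is Δ ≥ 0 with A(S^Δ(x)) >_{ae} B(S^Δ(x)) + x. -/
def AlmostSparse (r : ℕ → ℤ) : Prop :=
  (∀ A B : ℤ →₀ ℤ, AEgt r A B ∨ AEgt r B A ∨ AEeq r A B) ∧
  (∀ A B : ℤ →₀ ℤ, AEgt r A B →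
    ∃ Δ : ℕ, ∀ᶠ n in atTop, opEval r B (n + Δ) + r n < opEval r A (n + Δ))

noncomputable def opVal (A : ℤ →₀ ℤ) : ℚ :=
  A.sum fun i c => (c : ℚ) * (2 : ℚ) ^ i

lemma opEval_cast (A : ℤ →₀ ℤ) :
    ∀ᶠ n in atTop, ((opEval (fun n => (2 : ℤ) ^ n) A n : ℤ) : ℚ) = opVal A * 2 ^ n := by
  refine eventually_atTop.2 ⟨A.support.sup fun i => (-i).toNat, fun n hn => ?_⟩
  unfold opEval opVal Finsupp.sum
  push_cast
  rw [Finset.sum_mul]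
  refine Finset.sum_congr rfl fun i hi => ?_
  have h1 : (0:ℤ) ≤ (n : ℤ) + i := by
    have hle : (-i).toNat ≤ A.support.sup (fun i => (-i).toNat) := Finset.le_sup (f := fun i => (-i).toNat) hi
    omega
  have : ((2:ℚ) ^ (((n : ℤ) + i).toNat) : ℚ) = (2:ℚ) ^ ((n:ℤ) + i) := by
    rw [← zpow_natCast, Int.toNat_of_nonneg h1]
  rw [this, zpow_add₀ (by norm_num : (2:ℚ) ≠ 0), zpow_natCast]
  ring

lemma AEgt_iff (A B : ℤ →₀ ℤ) :
    AEgt (fun n => (2 : ℤ) ^ n) A B ↔ opVal B < opVal A := by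
  constructor
  · intro h
    obtain ⟨n, h1, h2, h3⟩ := (h.and ((opEval_cast A).and (opEval_cast B))).exists
    have : ((opEval (fun n => (2 : ℤ) ^ n) B n : ℤ) : ℚ) <
        ((opEval (fun n => (2 : ℤ) ^ n) A n : ℤ) : ℚ) := by exact_mod_cast h1
    rw [h2, h3] at this
    exact lt_of_mul_lt_mul_right this (by positivity)
  · intro h
    filter_upwards [opEval_cast A, opEval_cast B] with n h2 h3
    have : ((opEval (fun n => (2 : ℤ) ^ n) B n : ℤ) : ℚ) <
        ((opEval (fun n => (2 : ℤ) ^ n) A n : ℤ) : ℚ) := by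
      rw [h2, h3]
      exact mul_lt_mul_of_pos_right h (by positivity)
    exact_mod_cast this

lemma AEeq_iff (A B : ℤ →₀ ℤ) :
    AEeq (fun n => (2 : ℤ) ^ n) A B ↔ opVal A = opVal B := by
  constructor
  · intro h
    obtain ⟨n, h1, h2, h3⟩ := (h.and ((opEval_cast A).and (opEval_cast B))).exists
    have : ((opEval (fun n => (2 : ℤ) ^ n) A n : ℤ) : ℚ) =
        ((opEval (fun n => (2 : ℤ) ^ n) B n : ℤ) : ℚ) := by exact_mod_cast h1
    rw [h2, h3] at this
    exact mul_right_cancel₀ (by positivity) this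
  · intro h
    filter_upwards [opEval_cast A, opEval_cast B] with n h2 h3
    have : ((opEval (fun n => (2 : ℤ) ^ n) A n : ℤ) : ℚ) =
        ((opEval (fun n => (2 : ℤ) ^ n) B n : ℤ) : ℚ) := by rw [h2, h3, h]
    exact_mod_cast this

/-- The sequence (2^n) is almost sparse, with the three ae-relations mutually
exclusive (exactly one of A >_{ae} B, A <_{ae} B, A =_{ae} B holds). -/
theorem stmt4 :
    (∀ A B : ℤ →₀ ℤ,
      (AEgt (fun n => (2 : ℤ) ^ n) A B ∧ ¬ AEgt (fun n => (2 : ℤ) ^ n) B A ∧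
        ¬ AEeq (fun n => (2 : ℤ) ^ n) A B) ∨
      (AEgt (fun n => (2 : ℤ) ^ n) B A ∧ ¬ AEgt (fun n => (2 : ℤ) ^ n) A B ∧
        ¬ AEeq (fun n => (2 : ℤ) ^ n) A B) ∨
      (AEeq (fun n => (2 : ℤ) ^ n) A B ∧ ¬ AEgt (fun n => (2 : ℤ) ^ n) A B ∧
        ¬ AEgt (fun n => (2 : ℤ) ^ n) B A)) ∧
    AlmostSparse (fun n => (2 : ℤ) ^ n) := by
  constructor
  · intro A B
    rcases lt_trichotomy (opVal B) (opVal A) with h | h | h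
    · left
      exact ⟨(AEgt_iff A B).2 h, fun h' => absurd ((AEgt_iff B A).1 h') (by linarith),
        fun h' => absurd ((AEeq_iff A B).1 h') (by linarith)⟩
    · right; right
      exact ⟨(AEeq_iff A B).2 h.symm, fun h' => absurd ((AEgt_iff A B).1 h') (by linarith),
        fun h' => absurd ((AEgt_iff B A).1 h') (by linarith)⟩
    · right; left
      exact ⟨(AEgt_iff B A).2 h, fun h' => absurd ((AEgt_iff A B).1 h') (by linarith),
        fun h' => absurd ((AEeq_iff A B).1 h') (by linarith)⟩
  constructor
  · intro A B
    rcases lt_trichotomy (opVal B) (opVal A) with h | h | h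
    · exact Or.inl ((AEgt_iff A B).2 h)
    · exact Or.inr (Or.inr ((AEeq_iff A B).2 h.symm))
    · exact Or.inr (Or.inl ((AEgt_iff B A).2 h))
  · intro A B hAB
    have h := (AEgt_iff A B).1 hAB
    set d : ℚ := opVal A - opVal B with hd
    have hd0 : 0 < d := by simp [hd]; linarith
    obtain ⟨Δ, hΔ⟩ := pow_unbounded_of_one_lt (d⁻¹) (by norm_num : (1:ℚ) < 2)
    have hdΔ : 1 < d * 2 ^ Δ := by
      have := mul_lt_mul_of_pos_left hΔ hd0
      rwa [mul_inv_cancel₀ hd0.ne'] at this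
    refine ⟨Δ, ?_⟩
    obtain ⟨NA, hNA⟩ := eventually_atTop.1 (opEval_cast A)
    obtain ⟨NB, hNB⟩ := eventually_atTop.1 (opEval_cast B)
    refine eventually_atTop.2 ⟨NA + NB, fun n hn => ?_⟩
    have h2 := hNA (n + Δ) (by omega)
    have h3 := hNB (n + Δ) (by omega)
    have key : ((opEval (fun n => (2 : ℤ) ^ n) B (n + Δ) : ℤ) : ℚ) + 2 ^ n <
        ((opEval (fun n => (2 : ℤ) ^ n) A (n + Δ) : ℤ) : ℚ) := by
      rw [h2, h3]
      have : (1:ℚ) * 2 ^ n < (d * 2 ^ Δ) * 2 ^ n :=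
        mul_lt_mul_of_pos_right hdΔ (by positivity)
      have hpow : (2:ℚ) ^ (n + Δ) = 2 ^ n * 2 ^ Δ := pow_add 2 n Δ
      rw [hpow]
      simp only [hd] at this ⊢
      ring_nf at this ⊢
      linarith
    exact_mod_cast key
end

section
/- Let R be an almost sparse strictly increasing sequence of integers with all terms positive. Then for each n ≥ 1 there exists k ≥ 1 such that n·x <_{ae} S^k(x), i.e., n·r_m < r_{m+k} for all but finitely many m. -/
open Filter

lemma opEval_single (r : ℕ → ℤ) (i : ℤ) (c : ℤ) (m : ℕ) :
    opEval r (Finsupp.single i c) m = c * r (((m : ℤ) + i).toNat) := by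
  unfold opEval
  exact Finsupp.sum_single_index (by simp)

/-- For an almost sparse strictly increasing sequence of positive integers,
for each n ≥ 1 there is k ≥ 1 with n·r_m < r_(m+k) for all but finitely many m. -/
lemma stmt5_aux (r : ℕ → ℤ) (hmono : StrictMono r) (hpos : ∀ m, 0 < r m)
    (hs : AlmostSparse r) : ∀ N : ℕ,
    ∃ k : ℕ, 1 ≤ k ∧ ∀ᶠ m in atTop, ((N : ℤ) + 1) * r m < r (m + k) := by
  intro N
  induction N with
  | zero =>
    exact ⟨1, le_refl 1, Eventually.of_forall fun m => by
      simpa using hmono (Nat.lt_succ_self m)⟩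
  | succ N ih =>
    obtain ⟨k, hk1, hk⟩ := ih
    have hA : AEgt r (Finsupp.single (k : ℤ) 1) (Finsupp.single 0 ((N : ℤ) + 1)) := by
      filter_upwards [hk] with m hm
      rw [opEval_single, opEval_single]
      have h1 : (((m : ℤ) + 0)).toNat = m := by omega
      have h2 : (((m : ℤ) + (k : ℤ))).toNat = m + k := by omega
      rw [h1, h2, one_mul]
      exact hm
    obtain ⟨Δ, hΔ⟩ := hs.2 _ _ hA
    refine ⟨k + Δ, by omega, ?_⟩
    filter_upwards [hΔ] with m hm
    rw [opEval_single, opEval_single] at hm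
    have h1 : ((((m + Δ) : ℕ) : ℤ) + 0).toNat = m + Δ := by omega
    have h2 : ((((m + Δ) : ℕ) : ℤ) + (k : ℤ)).toNat = m + (k + Δ) := by omega
    rw [h1, h2, one_mul] at hm
    have hmono' : r m ≤ r (m + Δ) := hmono.monotone (Nat.le_add_right m Δ)
    push_cast
    nlinarith [hpos m]

/-- For an almost sparse strictly increasing sequence of positive integers,
for each n ≥ 1 there is k ≥ 1 with n·r_m < r_{m+k} for all but finitely many m. -/
theorem stmt5 (r : ℕ → ℤ) (hmono : StrictMono r) (hpos : ∀ m, 0 < r m)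
    (hs : AlmostSparse r) (n : ℤ) (hn : 1 ≤ n) :
    ∃ k : ℕ, 1 ≤ k ∧ ∀ᶠ m in atTop, n * r m < r (m + k) := by
  obtain ⟨k, hk1, hk⟩ := stmt5_aux r hmono hpos hs (n - 1).toNat
  refine ⟨k, hk1, ?_⟩
  have : ((((n - 1).toNat : ℤ)) + 1) = n := by omega
  rwa [this] at hk
end

section
/- If (r_n) is a strictly increasing sequence of positive integers with lim_{n→∞} r_{n+1}/r_n = ∞, then for any operators A >_{ae} B there exists Δ ≥ 0 such that A(S^Δ(x)) >_{ae} B(S^Δ(x)) + x; in particular such a sequence satisfies condition (2) of almost sparseness. -/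
open Filter

/-- If (r_n) is a strictly increasing sequence of positive integers with
r_{n+1}/r_n → ∞, then for any operators A >_{ae} B there is Δ ≥ 0 with
A(S^Δ(x)) >_{ae} B(S^Δ(x)) + x (condition (2) of almost sparseness). -/
theorem stmt8 (r : ℕ → ℤ) (hmono : StrictMono r) (hpos : ∀ n, 0 < r n)
    (hlim : Tendsto (fun n => (r (n + 1) : ℝ) / (r n : ℝ)) atTop atTop)
    (A B : ℤ →₀ ℤ) (hAB : AEgt r A B) :
    ∃ Δ : ℕ, ∀ᶠ n in atTop, opEval r B (n + Δ) + r n < opEval r A (n + Δ) := by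
  classical
  set D : ℤ →₀ ℤ := A - B with hDdef
  have hsub : ∀ n, opEval r D n = opEval r A n - opEval r B n := by
    intro n
    simp only [opEval, hDdef]
    rw [Finsupp.sum_sub_index]
    intro i c1 c2
    ring
  have hD : ∀ᶠ n in atTop, 0 < opEval r D n := by
    filter_upwards [hAB] with n h
    rw [hsub]; omega
  have hD0 : D ≠ 0 := by
    intro h
    obtain ⟨n, hn⟩ := hD.exists
    simp [opEval, h] at hn
  have hs : D.support.Nonempty := Finsupp.support_nonempty_iff.2 hD0
  set s := D.support with hsdef
  set m := s.max' hs with hmdef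
  set C : ℤ := ∑ i ∈ s, |D i| with hCdef
  have hC0 : 0 ≤ C := Finset.sum_nonneg fun i _ => abs_nonneg _
  -- superexponential growth
  obtain ⟨K, hK⟩ : ∃ K, ∀ k ≥ K, (C + 1) * r k < r (k + 1) := by
    obtain ⟨K, hK⟩ := (Filter.eventually_atTop).1
      (hlim.eventually (eventually_gt_atTop ((C : ℝ) + 1)))
    refine ⟨K, fun k hk => ?_⟩
    have h1 := hK k hk
    have h2 : (0 : ℝ) < (r k : ℝ) := by exact_mod_cast hpos k
    rw [lt_div_iff₀ h2] at h1
    exact_mod_cast h1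
  -- the estimate on the tail
  have hrest : ∀ n : ℕ, |∑ i ∈ s.erase m, D i * r (((n : ℤ) + i).toNat)|
      ≤ C * r (((n : ℤ) + m - 1).toNat) := by
    intro n
    calc |∑ i ∈ s.erase m, D i * r (((n : ℤ) + i).toNat)|
        ≤ ∑ i ∈ s.erase m, |D i * r (((n : ℤ) + i).toNat)| :=
          Finset.abs_sum_le_sum_abs _ _
      _ ≤ ∑ i ∈ s.erase m, |D i| * r (((n : ℤ) + m - 1).toNat) := by
          refine Finset.sum_le_sum fun i hi => ?_
          rw [abs_mul, abs_of_pos (hpos _)]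
          refine mul_le_mul_of_nonneg_left ?_ (abs_nonneg _)
          refine (hmono.monotone (Int.toNat_le_toNat ?_))
          have h1 : i ∈ s := Finset.mem_of_mem_erase hi
          have h2 : i ≠ m := Finset.ne_of_mem_erase hi
          have := s.le_max' i h1
          omega
      _ ≤ C * r (((n : ℤ) + m - 1).toNat) := by
          rw [← Finset.sum_mul]
          refine mul_le_mul_of_nonneg_right ?_ (hpos _).le
          exact Finset.sum_le_sum_of_subset_of_nonneg (Finset.erase_subset _ _)
            (fun i _ _ => abs_nonneg _)
  have hsplit : ∀ n : ℕ, opEval r D n = D m * r (((n : ℤ) + m).toNat)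
      + ∑ i ∈ s.erase m, D i * r (((n : ℤ) + i).toNat) := by
    intro n
    rw [opEval, Finsupp.sum, ← hsdef, ← Finset.add_sum_erase s _ (s.max'_mem hs)]
  -- leading coefficient is positive
  have hm1 : 1 ≤ D m := by
    by_contra hcon
    push_neg at hcon
    have hne : D m ≠ 0 := Finsupp.mem_support_iff.1 (s.max'_mem hs)
    have hmneg : D m ≤ -1 := by omega
    have hbig : ∀ᶠ (n : ℕ) in atTop,
        1 ≤ (n : ℤ) + m ∧ K ≤ (((n : ℤ) + m - 1).toNat) := by
      filter_upwards [eventually_ge_atTop (K + 1 + m.natAbs)] with n hn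
      omega
    obtain ⟨n, hpos', h1, h2⟩ := (hD.and hbig).exists
    set t0 := (((n : ℤ) + m - 1).toNat) with ht0
    have ht1 : (((n : ℤ) + m).toNat) = t0 + 1 := by omega
    have hKt := hK t0 h2
    have hseq := hsplit n
    have habs := hrest n
    rw [ht1] at hseq
    have hdm : D m * r (t0 + 1) ≤ -r (t0 + 1) := by nlinarith [hpos (t0 + 1)]
    have : opEval r D n < 0 := by
      have := abs_le.1 habs
      nlinarith [hpos t0, hpos (t0 + 1)]
    omega
  -- choose Δ
  refine ⟨(1 - m).toNat, ?_⟩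
  filter_upwards [eventually_ge_atTop K] with n hn
  set Δ := (1 - m).toNat with hΔdef
  have hΔ : 1 ≤ (Δ : ℤ) + m := by omega
  set t0 := ((((n + Δ : ℕ) : ℤ) + m - 1).toNat) with ht0
  have ht1 : ((((n + Δ : ℕ) : ℤ) + m).toNat) = t0 + 1 := by
    push_cast; omega
  have hnt0 : n ≤ t0 := by push_cast at ht0 ⊢; omega
  have hKt0 : K ≤ t0 := le_trans hn hnt0
  have hKt := hK t0 hKt0
  have hseq := hsplit (n + Δ)
  have habs := hrest (n + Δ)
  rw [ht1] at hseq
  have hdm : r (t0 + 1) ≤ D m * r (t0 + 1) := by nlinarith [hpos (t0 + 1)]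
  have hrn : r n ≤ r t0 := hmono.monotone hnt0
  have hgoal : r n < opEval r D (n + Δ) := by
    have := abs_le.1 habs
    nlinarith [hpos t0]
  rw [hsub] at hgoal
  omega
end

section
/- Every coset of (ℚ_p^×)^n in ℚ_p^× is represented by a positive integer; i.e., for every x ∈ ℚ_p^× there exists a positive integer k and y ∈ ℚ_p^× with x = k·y^n. -/
/-!
Write `x = u * p ^ v` with `u` a unit of `ℤ_[p]` and `v = n * q + r`, `0 ≤ r`. As `ℕ` is dense in
`ℤ_[p]`, some positive integer `k` satisfies `‖u - k‖ < ‖n‖ ^ 2`, so Hensel's lemma applied to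
`k * X ^ n - u` at `1` gives `u = k * z ^ n`. Then `x = (p ^ r * k) * (z * p ^ q) ^ n`.
-/

namespace PadicInt

open Polynomial

variable {p : ℕ} [Fact p.Prime]

theorem exists_mul_pow_eq_of_norm_sub_lt {n : ℕ} {a b : ℤ_[p]} (ha : ‖a‖ = 1)
    (h : ‖b - a‖ < ‖(n : ℤ_[p])‖ ^ 2) : ∃ z : ℤ_[p], b = a * z ^ n := by
  have heval : (C a * X ^ n - C b).eval 1 = a - b := by simp
  have hderiv : (derivative (C a * X ^ n - C b)).eval 1 = a * n := by
    simp [derivative_X_pow]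
  obtain ⟨z, hz, -⟩ := hensels_lemma (F := C a * X ^ n - C b) (a := 1) (by
    rwa [coe_aeval_eq_eval, heval, hderiv, norm_mul, ha, one_mul, norm_sub_rev])
  exact ⟨z, by simpa [sub_eq_zero, eq_comm] using hz⟩

theorem exists_natCast_mul_pow_eq {n : ℕ} (hn : n ≠ 0) {u : ℤ_[p]} (hu : ‖u‖ = 1) :
    ∃ k : ℕ, 0 < k ∧ ∃ z : ℤ_[p], u = k * z ^ n := by
  have hε : 0 < ‖(n : ℤ_[p])‖ ^ 2 := pow_pos (norm_pos_iff.2 (Nat.cast_ne_zero.2 hn)) 2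
  obtain ⟨k, hk⟩ := denseRange_natCast.exists_dist_lt u hε
  rw [dist_eq_norm] at hk
  have hk_norm : ‖(k : ℤ_[p])‖ = 1 := by
    have hlt : ‖(u : ℚ_[p]) - k‖ < ‖(u : ℚ_[p])‖ := by
      rw [← norm_def, hu]
      simpa [norm_def] using hk.trans_le (pow_le_one₀ (norm_nonneg _) (norm_le_one _))
    simpa [norm_def, hu] using (Padic.norm_eq_of_norm_sub_lt_left hlt).symm
  refine ⟨k, Nat.pos_of_ne_zero fun h => by simp [h] at hk_norm, ?_⟩
  exact exists_mul_pow_eq_of_norm_sub_lt hk_norm hk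

end PadicInt

namespace Padic

variable {p : ℕ} [Fact p.Prime]

theorem exists_norm_eq_one_mul_zpow_valuation {x : ℚ_[p]} (hx : x ≠ 0) :
    ∃ u : ℤ_[p], ‖u‖ = 1 ∧ x = u * (p : ℚ_[p]) ^ x.valuation := by
  have hp : (p : ℚ_[p]) ≠ 0 := by exact_mod_cast (Fact.out : p.Prime).ne_zero
  have hu : ‖x * (p : ℚ_[p]) ^ (-x.valuation)‖ = 1 := by
    rw [norm_mul, norm_zpow, norm_p, norm_eq_zpow_neg_valuation hx, inv_zpow', ← zpow_add₀]
    all_goals simp [(Fact.out : p.Prime).ne_zero]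
  refine ⟨⟨_, hu.le⟩, hu, ?_⟩
  simp [mul_assoc, inv_mul_cancel₀ (zpow_ne_zero _ hp)]

end Padic

/-- Every coset of (ℚ_p^×)^n in ℚ_p^× is represented by a positive integer:
for every x ∈ ℚ_p^× there are a positive integer k and y ∈ ℚ_p^× with x = k·y^n. -/
theorem stmt11 (p : ℕ) [Fact p.Prime] (n : ℕ) (hn : 2 ≤ n)
    (x : ℚ_[p]) (hx : x ≠ 0) :
    ∃ k : ℕ, 0 < k ∧ ∃ y : ℚ_[p], y ≠ 0 ∧ x = (k : ℚ_[p]) * y ^ n := by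
  have hn0 : n ≠ 0 := by omega
  have hp : (p : ℚ_[p]) ≠ 0 := by exact_mod_cast (Fact.out : p.Prime).ne_zero
  obtain ⟨u, hu, hxu⟩ := Padic.exists_norm_eq_one_mul_zpow_valuation hx
  obtain ⟨k, hk, z, rfl⟩ := PadicInt.exists_natCast_mul_pow_eq hn0 hu
  obtain ⟨q, r, hv⟩ : ∃ (q : ℤ) (r : ℕ), x.valuation = n * q + r :=
    ⟨x.valuation / n, (x.valuation % n).toNat, by
      rw [Int.toNat_of_nonneg (Int.emod_nonneg _ (by exact_mod_cast hn0)), Int.mul_ediv_add_emod]⟩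
  have hxk : x = ((p ^ r * k : ℕ) : ℚ_[p]) * (z * (p : ℚ_[p]) ^ q) ^ n := by
    rw [hxu, hv, zpow_add₀ hp, zpow_mul', zpow_natCast, zpow_natCast]
    push_cast
    ring
  exact ⟨p ^ r * k, Nat.mul_pos (pow_pos (Fact.out : p.Prime).pos r) hk, _,
    fun hy => hx (by simp [hxk, hy, hn0]), hxk⟩
end

section
/- Let K be a field with valuation v and a multiplicative projection π on K^× satisfying v(π(a)) = v(a) and π multiplicative. If K₀ ⊆ K is a subfield closed under π and a ∈ K is algebraic over K₀, then π(a)^n ∈ K₀ for some n ≥ 1. -/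
/-- Let (K,v) be a valued field with a projection π on K^× that is multiplicative,
depends only on the valuation (v(x) = v(y) → π(x) = π(y)), and satisfies
v(π(a)) = v(a). If K₀ ⊆ K is a subfield closed under π and a ∈ K^× is algebraic
over K₀, then π(a)^n ∈ K₀ for some n ≥ 1. -/
theorem stmt13 {K Γ : Type*} [Field K] [LinearOrderedCommGroupWithZero Γ]
    (v : Valuation K Γ) (π : K → K)
    (hmul : ∀ x y : K, x ≠ 0 → y ≠ 0 → π (x * y) = π x * π y)
    (hvaleq : ∀ x y : K, x ≠ 0 → y ≠ 0 → v x = v y → π x = π y)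
    (hvπ : ∀ a : K, a ≠ 0 → v (π a) = v a)
    (K₀ : Subfield K) (hclosed : ∀ x ∈ K₀, x ≠ 0 → π x ∈ K₀)
    (a : K) (ha : a ≠ 0) (halg : IsAlgebraic K₀ a) :
    ∃ n : ℕ, 1 ≤ n ∧ π a ^ n ∈ K₀ := by
  obtain ⟨p, hp0, hpa⟩ := halg
  set q : Polynomial K := p.map (algebraMap K₀ K) with hq
  have hq0 : q ≠ 0 := by
    rw [hq, Polynomial.map_ne_zero_iff (algebraMap K₀ K).injective]
    exact hp0
  have hcoeff : ∀ i, q.coeff i ∈ K₀ := by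
    intro i
    rw [hq, Polynomial.coeff_map]
    exact SetLike.coe_mem _
  have heval : q.eval a = 0 := by
    rw [hq, Polynomial.eval_map, ← Polynomial.aeval_def, hpa]
  have hsum : ∑ i ∈ q.support, q.coeff i * a ^ i = 0 := by
    rw [← heval, Polynomial.eval_eq_sum, Polynomial.sum_def]
  -- find two distinct indices with equal term valuation
  have key : ∃ i ∈ q.support, ∃ j ∈ q.support, i < j ∧
      v (q.coeff i * a ^ i) = v (q.coeff j * a ^ j) := by
    have hsupp : q.support.Nonempty := Polynomial.support_nonempty.mpr hq0
    obtain ⟨i₀, hi₀, hmax⟩ := q.support.exists_max_image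
      (fun i => v (q.coeff i * a ^ i)) hsupp
    have hterm : ∀ i ∈ q.support, q.coeff i * a ^ i ≠ 0 := fun i hi =>
      mul_ne_zero (Polynomial.mem_support_iff.mp hi) (pow_ne_zero _ ha)
    by_cases hex : ∃ j ∈ q.support, j ≠ i₀ ∧
        v (q.coeff j * a ^ j) = v (q.coeff i₀ * a ^ i₀)
    · obtain ⟨j, hj, hji, hvj⟩ := hex
      rcases lt_or_gt_of_ne hji with h | h
      · exact ⟨j, hj, i₀, hi₀, h, hvj⟩
      · exact ⟨i₀, hi₀, j, hj, h, hvj.symm⟩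
    · exfalso
      push_neg at hex
      have hM0 : v (q.coeff i₀ * a ^ i₀) ≠ 0 :=
        v.ne_zero_iff.mpr (hterm i₀ hi₀)
      have hlt : ∀ j ∈ q.support.erase i₀,
          v (q.coeff j * a ^ j) < v (q.coeff i₀ * a ^ i₀) := by
        intro j hj
        obtain ⟨hji, hjs⟩ := Finset.mem_erase.mp hj
        exact lt_of_le_of_ne (hmax j hjs) (hex j hjs hji)
      have hsum' : v (∑ j ∈ q.support.erase i₀, q.coeff j * a ^ j)
          < v (q.coeff i₀ * a ^ i₀) := v.map_sum_lt hM0 hlt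
      have : q.coeff i₀ * a ^ i₀ =
          -∑ j ∈ q.support.erase i₀, q.coeff j * a ^ j := by
        have := Finset.sum_erase_add q.support (fun i => q.coeff i * a ^ i) hi₀
        rw [hsum] at this
        linear_combination this
      rw [this, Valuation.map_neg] at hM0
      rw [this, Valuation.map_neg] at hsum'
      exact absurd hsum' (lt_irrefl _)
  obtain ⟨i, hi, j, hj, hij, heq⟩ := key
  have hci : q.coeff i ≠ 0 := Polynomial.mem_support_iff.mp hi
  have hcj : q.coeff j ≠ 0 := Polynomial.mem_support_iff.mp hj
  have hva : v a ≠ 0 := v.ne_zero_iff.mpr ha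
  have hvci : v (q.coeff i) ≠ 0 := v.ne_zero_iff.mpr hci
  have hvcj : v (q.coeff j) ≠ 0 := v.ne_zero_iff.mpr hcj
  set n := j - i with hn
  have hn1 : 1 ≤ n := Nat.sub_pos_of_lt hij
  -- v a ^ n = v (coeff i / coeff j)
  have hvan : v (a ^ n) = v (q.coeff i / q.coeff j) := by
    rw [map_pow, map_div₀]
    rw [map_mul, map_mul, map_pow, map_pow] at heq
    have hpj : v a ^ j = v a ^ n * v a ^ i := by
      rw [← pow_add, Nat.sub_add_cancel hij.le]
    rw [hpj] at heq
    have h2 : v (q.coeff i) = v (q.coeff j) * v a ^ n := by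
      have h3 : v (q.coeff i) * v a ^ i =
          (v (q.coeff j) * v a ^ n) * v a ^ i := by rw [heq, mul_assoc]
      exact mul_right_cancel₀ (pow_ne_zero i hva) h3
    rw [eq_div_iff hvcj, h2, mul_comm]
  set b := q.coeff i / q.coeff j with hb
  have hbK : b ∈ K₀ := div_mem (hcoeff i) (hcoeff j)
  have hb0 : b ≠ 0 := div_ne_zero hci hcj
  have han : a ^ n ≠ 0 := pow_ne_zero _ ha
  -- π (a ^ n) = π a ^ n
  have hpipow : ∀ m : ℕ, π (a ^ (m + 1)) = π a ^ (m + 1) := by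
    intro m
    induction m with
    | zero => simp
    | succ k ih =>
      rw [pow_succ, hmul _ _ (pow_ne_zero _ ha) ha, ih]
      ring
  refine ⟨n, hn1, ?_⟩
  have : π a ^ n = π b := by
    obtain ⟨m, hm⟩ := Nat.exists_eq_add_of_le hn1
    rw [hm, Nat.add_comm 1 m] at hvan ⊢
    rw [← hpipow m]
    exact hvaleq _ _ (pow_ne_zero _ ha) hb0 hvan
  rw [this]
  exact hclosed b hbK hb0
end
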